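/- Let μ be the bracket on ℝ⁶ given by μ(e₁,e₂) = e₄, μ(e₁,e₃) = e₅, μ(e₂,e₃) = e₆. Then: (i) a symmetric 6×6 real matrix D is a derivation of μ if and only if there exist real a,b,c,d,e,f such that D = diag(S, S̃) in block form with S = [[a,b,c],[b,d,e],[c,e,f]] on span(e₁,e₂,e₃) and S̃ = [[a+d, e, −c],[e, a+f, b],[−c, b, d+f]] on span(e₄,e₅,e₆); (ii) the set {diag(a,b,c,a+b,a+c,b+c) : a,b,c ∈ ℝ} is a 3-dimensional subspace of pairwise-commuting symmetric derivations of μ, and every linear subspace of symmetric derivations of μ whose elements pairwise commute has dimension at most 3. -/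

import Mathlib

/-!
The Leibniz rule on `μ(eᵢ, eⱼ)` expresses the columns of a derivation on the centre
`span(e₄, e₅, e₆)` through its columns on the generators `e₁, e₂, e₃`; in particular every
derivation preserves the centre. For a symmetric derivation this leaves only the symmetric block
`S` on the generators free and forces `D = diag(S, S̃)`. So `D ↦ S` is injective on symmetric
derivations and multiplicative on derivations, and a commuting space of symmetric derivations
embeds into a commuting space of symmetric `3 × 3` matrices. Such a space is diagonal in one
basis `(bₖ)`, hence acts faithfully on the single vector `∑ₖ bₖ`, and has dimension at most `3`.
-/

open Matrix

/-- The bracket on ℝ⁶ given by μ(e₁,e₂) = e₄, μ(e₁,e₃) = e₅, μ(e₂,e₃) = e₆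
(bilinear extension); this is the nilsoliton μ₂₄ = (0,0,0,12,13,23),
the free 2-step nilpotent Lie algebra on three generators. -/
def mu24 (x y : Fin 6 → ℝ) : Fin 6 → ℝ :=
  ![0, 0, 0, x 0 * y 1 - x 1 * y 0, x 0 * y 2 - x 2 * y 0, x 1 * y 2 - x 2 * y 1]

/-- `D` is a derivation of the bracket `mu24`. -/
def IsDerivMu24 (D : Matrix (Fin 6) (Fin 6) ℝ) : Prop :=
  ∀ x y : Fin 6 → ℝ, D.mulVec (mu24 x y) = mu24 (D.mulVec x) y + mu24 x (D.mulVec y)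

/-- The set {diag(a,b,c,a+b,a+c,b+c) : a,b,c ∈ ℝ}. -/
def S24 : Set (Matrix (Fin 6) (Fin 6) ℝ) :=
  {D | ∃ a b c : ℝ, D = Matrix.diagonal ![a, b, c, a + b, a + c, b + c]}

open Module Function

namespace LinearMap.IsSymmetric

variable {𝕜 E : Type*} [RCLike 𝕜] [NormedAddCommGroup E] [InnerProductSpace 𝕜 E]
  [FiniteDimensional 𝕜 E]

theorem exists_basis_eigenvector_of_commute {ι : Type*} {T : ι → E →ₗ[𝕜] E}
    (hT : ∀ i, (T i).IsSymmetric) (h : Pairwise (Commute on T)) :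
    ∃ (s : Set E) (b : Basis s 𝕜 E), ∀ k i, ∃ c : 𝕜, T i (b k) = c • b k := by
  have hspan : ⊤ ≤ Submodule.span 𝕜
      (⋃ χ : ι → 𝕜, ((⨅ i, End.eigenspace (T i) (χ i) : Submodule 𝕜 E) : Set E)) := by
    rw [← Submodule.iSup_eq_span, iSup_iInf_eq_top_of_commute hT h]
  refine ⟨_, Basis.ofSpan hspan, fun k i => ?_⟩
  obtain ⟨_, ⟨χ, rfl⟩, hk⟩ := Basis.ofSpan_subset hspan (Set.mem_range_self k)
  exact ⟨χ i, End.mem_eigenspace_iff.mp ((Submodule.mem_iInf _).mp hk i)⟩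

end LinearMap.IsSymmetric

section CommutingSymmetric

variable {𝕜 : Type*} [RCLike 𝕜]

theorem Submodule.finrank_le_of_isSymmetric_of_commute {E : Type*} [NormedAddCommGroup E]
    [InnerProductSpace 𝕜 E] [FiniteDimensional 𝕜 E] (W : Submodule 𝕜 (End 𝕜 E))
    (hsymm : ∀ T ∈ W, T.IsSymmetric) (hcomm : ∀ S ∈ W, ∀ T ∈ W, Commute S T) :
    finrank 𝕜 W ≤ finrank 𝕜 E := by
  obtain ⟨s, b, hb⟩ := LinearMap.IsSymmetric.exists_basis_eigenvector_of_commute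
    (T := ((↑) : W → End 𝕜 E)) (fun T => hsymm T T.2) (fun S T _ => hcomm S S.2 T T.2)
  have : Fintype s := FiniteDimensional.fintypeBasisIndex b
  let eval : W →ₗ[𝕜] E := (LinearMap.applyₗ (∑ k, b k)).comp W.subtype
  refine LinearMap.finrank_le_finrank_of_injective (f := eval) ?_
  rw [injective_iff_map_eq_zero]
  intro T hT
  choose c hc using fun k => hb k T
  have hsum : ∑ k, c k • b k = 0 := by
    simpa [eval, map_sum, hc] using hT
  have hc0 := Fintype.linearIndependent_iff.mp b.linearIndependent c hsum
  exact Subtype.ext (b.ext fun k => by simp [hc, hc0])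

theorem Matrix.finrank_le_of_isHermitian_of_commute {n : Type*} [Fintype n] [DecidableEq n]
    (W : Submodule 𝕜 (Matrix n n 𝕜))
    (hherm : ∀ A ∈ W, A.IsHermitian) (hcomm : ∀ A ∈ W, ∀ B ∈ W, Commute A B) :
    finrank 𝕜 W ≤ Fintype.card n := by
  rw [← LinearEquiv.finrank_map_eq toEuclideanLin, ← finrank_euclideanSpace (𝕜 := 𝕜)]
  apply Submodule.finrank_le_of_isSymmetric_of_commute
  · rintro _ ⟨A, hA, rfl⟩
    exact isSymmetric_toEuclideanLin_iff.mpr (hherm A hA)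
  · rintro _ ⟨A, hA, rfl⟩ _ ⟨B, hB, rfl⟩
    exact (hcomm A hA B hB).map (toLpLinAlgEquiv 2)

end CommutingSymmetric

theorem Matrix.submatrix_castAdd_mul {α : Type*} [NonUnitalNonAssocSemiring α] {m n : ℕ}
    (M N : Matrix (Fin (m + n)) (Fin (m + n)) α)
    (hM : ∀ i j, M (Fin.castAdd n i) (Fin.natAdd m j) = 0) :
    (M * N).submatrix (Fin.castAdd n) (Fin.castAdd n) =
      M.submatrix (Fin.castAdd n) (Fin.castAdd n) *
        N.submatrix (Fin.castAdd n) (Fin.castAdd n) := by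
  ext i j
  simp [mul_apply, Fin.sum_univ_add, hM]

section Mu24

variable {D : Matrix (Fin 6) (Fin 6) ℝ}

def symmDerivMu24 (a b c d e f : ℝ) : Matrix (Fin 6) (Fin 6) ℝ :=
  !![a, b, c, 0, 0, 0;
     b, d, e, 0, 0, 0;
     c, e, f, 0, 0, 0;
     0, 0, 0, a + d, e, -c;
     0, 0, 0, e, a + f, b;
     0, 0, 0, -c, b, d + f]

lemma isDerivMu24_symmDerivMu24 (a b c d e f : ℝ) : IsDerivMu24 (symmDerivMu24 a b c d e f) := by
  intro x y
  ext k
  fin_cases k <;> simp [mu24, symmDerivMu24, mulVec, dotProduct, Fin.sum_univ_six] <;> ring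

lemma IsDerivMu24.col_three (h : IsDerivMu24 D) :
    (fun i => D i 3) = ![0, 0, 0, D 0 0 + D 1 1, D 2 1, -D 2 0] := by
  simpa [funext_iff, Fin.forall_fin_succ, mu24, mulVec, dotProduct, Fin.sum_univ_six]
    using h (Pi.single 0 1) (Pi.single 1 1)

lemma IsDerivMu24.col_four (h : IsDerivMu24 D) :
    (fun i => D i 4) = ![0, 0, 0, D 1 2, D 0 0 + D 2 2, D 1 0] := by
  simpa [funext_iff, Fin.forall_fin_succ, mu24, mulVec, dotProduct, Fin.sum_univ_six]
    using h (Pi.single 0 1) (Pi.single 2 1)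

lemma IsDerivMu24.col_five (h : IsDerivMu24 D) :
    (fun i => D i 5) = ![0, 0, 0, -D 0 2, D 0 1, D 1 1 + D 2 2] := by
  simpa [funext_iff, Fin.forall_fin_succ, mu24, mulVec, dotProduct, Fin.sum_univ_six]
    using h (Pi.single 1 1) (Pi.single 2 1)

lemma IsDerivMu24.apply_castAdd_natAdd (h : IsDerivMu24 D) (i j : Fin 3) :
    D (Fin.castAdd 3 i) (Fin.natAdd 3 j) = 0 := by
  have h₃ := h.col_three
  have h₄ := h.col_four
  have h₅ := h.col_five
  simp only [funext_iff, Fin.forall_fin_succ] at h₃ h₄ h₅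
  fin_cases i <;> fin_cases j <;> simp_all

lemma IsDerivMu24.eq_symmDerivMu24 (hD : D.IsSymm) (h : IsDerivMu24 D) :
    D = symmDerivMu24 (D 0 0) (D 0 1) (D 0 2) (D 1 1) (D 1 2) (D 2 2) := by
  have h₃ := h.col_three
  have h₄ := h.col_four
  have h₅ := h.col_five
  simp [funext_iff, Fin.forall_fin_succ] at h₃ h₄ h₅
  have hs := hD.apply
  ext i j
  fin_cases i <;> fin_cases j <;> simp [symmDerivMu24] <;>
    linarith [hs 0 1, hs 0 2, hs 1 2, hs 0 3, hs 0 4, hs 0 5, hs 1 3, hs 1 4, hs 1 5,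
      hs 2 3, hs 2 4, hs 2 5]

lemma isDerivMu24_iff_exists_eq_symmDerivMu24 (hD : D.IsSymm) :
    IsDerivMu24 D ↔ ∃ a b c d e f : ℝ, D = symmDerivMu24 a b c d e f :=
  ⟨fun h => ⟨_, _, _, _, _, _, h.eq_symmDerivMu24 hD⟩,
    fun ⟨a, b, c, d, e, f, hDeq⟩ => hDeq ▸ isDerivMu24_symmDerivMu24 a b c d e f⟩

def upperLeft : Matrix (Fin 6) (Fin 6) ℝ →ₗ[ℝ] Matrix (Fin 3) (Fin 3) ℝ where
  toFun D := D.submatrix (Fin.castAdd 3) (Fin.castAdd 3)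
  map_add' _ _ := rfl
  map_smul' _ _ := rfl

lemma IsDerivMu24.upperLeft_mul (h : IsDerivMu24 D) (E : Matrix (Fin 6) (Fin 6) ℝ) :
    upperLeft (D * E) = upperLeft D * upperLeft E :=
  submatrix_castAdd_mul (m := 3) (n := 3) D E h.apply_castAdd_natAdd

lemma IsDerivMu24.eq_of_upperLeft_eq {D' : Matrix (Fin 6) (Fin 6) ℝ}
    (hD : D.IsSymm) (h : IsDerivMu24 D) (hD' : D'.IsSymm) (h' : IsDerivMu24 D')
    (hDD' : upperLeft D = upperLeft D') : D = D' := by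
  rw [h.eq_symmDerivMu24 hD, h'.eq_symmDerivMu24 hD']
  congr 1
  exacts [congrFun₂ hDD' 0 0, congrFun₂ hDD' 0 1, congrFun₂ hDD' 0 2, congrFun₂ hDD' 1 1,
    congrFun₂ hDD' 1 2, congrFun₂ hDD' 2 2]

lemma finrank_le_three_of_isDerivMu24 (V : Submodule ℝ (Matrix (Fin 6) (Fin 6) ℝ))
    (hV : ∀ D ∈ V, D.IsSymm ∧ IsDerivMu24 D) (hcomm : ∀ D ∈ V, ∀ E ∈ V, D * E = E * D) :
    finrank ℝ V ≤ 3 := by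
  have hinj : Injective (upperLeft.comp V.subtype) := fun D E hDE =>
    Subtype.ext <| (hV D D.2).2.eq_of_upperLeft_eq (hV D D.2).1 (hV E E.2).1 (hV E E.2).2 hDE
  rw [← LinearMap.finrank_range_of_inj hinj]
  refine (finrank_le_of_isHermitian_of_commute _ ?_ ?_).trans_eq (Fintype.card_fin 3)
  · rintro _ ⟨D, rfl⟩
    exact isHermitian_iff_isSymm.mpr ((hV D D.2).1.submatrix _)
  · rintro _ ⟨D, rfl⟩ _ ⟨E, rfl⟩
    simp only [LinearMap.comp_apply, Submodule.subtype_apply, commute_iff_eq]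
    rw [← (hV D D.2).2.upperLeft_mul, ← (hV E E.2).2.upperLeft_mul, hcomm D D.2 E E.2]

def weightsMu24 : (Fin 3 → ℝ) →ₗ[ℝ] (Fin 6 → ℝ) where
  toFun v := ![v 0, v 1, v 2, v 0 + v 1, v 0 + v 2, v 1 + v 2]
  map_add' v w := by ext i; fin_cases i <;> simp <;> ring
  map_smul' r v := by ext i; fin_cases i <;> simp <;> ring

lemma weightsMu24_injective : Injective weightsMu24 := fun v w h => by
  ext i
  fin_cases i
  exacts [congrFun h 0, congrFun h 1, congrFun h 2]

lemma coe_range_diagonal_comp_weightsMu24 :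
    (LinearMap.range ((diagonalLinearMap (Fin 6) ℝ ℝ).comp weightsMu24) : Set _) = S24 := by
  ext D
  constructor
  · rintro ⟨v, rfl⟩
    exact ⟨v 0, v 1, v 2, rfl⟩
  · rintro ⟨a, b, c, rfl⟩
    exact ⟨![a, b, c], rfl⟩

lemma diagonal_eq_symmDerivMu24 (a b c : ℝ) :
    diagonal ![a, b, c, a + b, a + c, b + c] = symmDerivMu24 a 0 0 b 0 c := by
  ext i j
  fin_cases i <;> fin_cases j <;> simp [symmDerivMu24]

end Mu24

theorem stmt13 :
    (∀ D : Matrix (Fin 6) (Fin 6) ℝ, D.IsSymm →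
      (IsDerivMu24 D ↔ ∃ a b c d e f : ℝ,
        D = !![a, b, c, 0, 0, 0;
               b, d, e, 0, 0, 0;
               c, e, f, 0, 0, 0;
               0, 0, 0, a + d, e, -c;
               0, 0, 0, e, a + f, b;
               0, 0, 0, -c, b, d + f])) ∧
    (∀ D ∈ S24, D.IsSymm ∧ IsDerivMu24 D) ∧
    (∀ D ∈ S24, ∀ E ∈ S24, D * E = E * D) ∧
    (∃ A : Submodule ℝ (Matrix (Fin 6) (Fin 6) ℝ),
        (A : Set (Matrix (Fin 6) (Fin 6) ℝ)) = S24 ∧ Module.finrank ℝ A = 3) ∧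
    (∀ V : Submodule ℝ (Matrix (Fin 6) (Fin 6) ℝ),
        (∀ D ∈ V, D.IsSymm ∧ IsDerivMu24 D) →
        (∀ D ∈ V, ∀ E ∈ V, D * E = E * D) →
        Module.finrank ℝ V ≤ 3) := by
  refine ⟨fun D hD => isDerivMu24_iff_exists_eq_symmDerivMu24 hD, ?_, ?_, ?_,
    finrank_le_three_of_isDerivMu24⟩
  · rintro D ⟨a, b, c, rfl⟩
    refine ⟨isSymm_diagonal _, ?_⟩
    rw [diagonal_eq_symmDerivMu24]
    exact isDerivMu24_symmDerivMu24 a 0 0 b 0 c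
  · rintro D ⟨a, b, c, rfl⟩ E ⟨a', b', c', rfl⟩
    exact commute_diagonal _ _
  · refine ⟨_, coe_range_diagonal_comp_weightsMu24, ?_⟩
    rw [LinearMap.finrank_range_of_inj (diagonal_injective.comp weightsMu24_injective),
      finrank_fin_fun]
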